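/- arXiv:2410.15434 — 4 statements merged into one kernel-verified Lean document; each statement's English description precedes it below -/
import Mathlib

section
/- The number of increasing alternating permutations of {1,...,n} equals (n−1)!! (double factorial of n−1) when n is odd, and equals n!! − (n−1)!! when n is even and positive. In particular the counts for n = 0,...,8 are 1, 1, 1, 2, 5, 8, 33, 48, 279. -/
open Finset

/-- `ℓ` is a valley of `π`: `2 ≤ ℓ ≤ n-1` (1-based) with `π(ℓ-1) > π(ℓ) < π(ℓ+1)`. -/
def IsValley {n : ℕ} (π : Equiv.Perm (Fin n)) (ℓ : Fin n) : Prop :=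
  1 ≤ ℓ.val ∧ ∃ h2 : ℓ.val + 1 < n,
    π ⟨ℓ.val - 1, lt_of_le_of_lt (Nat.sub_le _ _) ℓ.isLt⟩ > π ℓ ∧ π ℓ < π ⟨ℓ.val + 1, h2⟩

/-- number of valleys of `π` -/
noncomputable def valCount {n : ℕ} (π : Equiv.Perm (Fin n)) : ℕ :=
  {ℓ : Fin n | IsValley π ℓ}.ncard

/-- `ℓ` is a peak of `π`. -/
def IsPeak {n : ℕ} (π : Equiv.Perm (Fin n)) (ℓ : Fin n) : Prop :=
  1 ≤ ℓ.val ∧ ∃ h2 : ℓ.val + 1 < n,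
    π ⟨ℓ.val - 1, lt_of_le_of_lt (Nat.sub_le _ _) ℓ.isLt⟩ < π ℓ ∧ π ℓ > π ⟨ℓ.val + 1, h2⟩

/-- number of peaks of `π` -/
noncomputable def peakCount {n : ℕ} (π : Equiv.Perm (Fin n)) : ℕ :=
  {ℓ : Fin n | IsPeak π ℓ}.ncard

/-- number of descents of `π` -/
noncomputable def desCount {n : ℕ} (π : Equiv.Perm (Fin n)) : ℕ :=
  {ℓ : Fin n | ∃ h : ℓ.val + 1 < n, π ⟨ℓ.val + 1, h⟩ < π ℓ}.ncard

/-- `π` is increasing: the values at its valleys, from left to right, strictly increase. -/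
def Increasing {n : ℕ} (π : Equiv.Perm (Fin n)) : Prop :=
  ∀ i j : Fin n, IsValley π i → IsValley π j → i < j → π i < π j

/-- `ℓ` is the first position of a (maximal increasing) run of `π`. -/
def IsRunStart {n : ℕ} (π : Equiv.Perm (Fin n)) (ℓ : Fin n) : Prop :=
  ℓ.val = 0 ∨ π ⟨ℓ.val - 1, lt_of_le_of_lt (Nat.sub_le _ _) ℓ.isLt⟩ > π ℓ

/-- number of (maximal increasing) runs of `π` -/
noncomputable def runCount {n : ℕ} (π : Equiv.Perm (Fin n)) : ℕ :=
  {ℓ : Fin n | IsRunStart π ℓ}.ncard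

/-- `π` is flattened: the first entries of its runs, from left to right, increase. -/
def Flattened {n : ℕ} (π : Equiv.Perm (Fin n)) : Prop :=
  ∀ i j : Fin n, IsRunStart π i → IsRunStart π j → i < j → π i < π j

/-- `π i` is a right-to-left minimum of `π`. -/
def IsRLMin {n : ℕ} (π : Equiv.Perm (Fin n)) (i : Fin n) : Prop :=
  ∀ j : Fin n, i < j → π i < π j

/-- number of right-to-left minima of `π` -/
noncomputable def rlmCount {n : ℕ} (π : Equiv.Perm (Fin n)) : ℕ :=
  {i : Fin n | IsRLMin π i}.ncard

/-- `π` is alternating: `π(1) > π(2) < π(3) > π(4) < ⋯` (1-based). -/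
def Alternating {n : ℕ} (π : Equiv.Perm (Fin n)) : Prop :=
  ∀ (i : ℕ) (h : i + 1 < n),
    if Even i then π ⟨i + 1, h⟩ < π ⟨i, by omega⟩ else π ⟨i, by omega⟩ < π ⟨i + 1, h⟩

/-- number of increasing alternating permutations of `{1,...,n}` -/
noncomputable def incAlt (n : ℕ) : ℕ :=
  {π : Equiv.Perm (Fin n) | Increasing π ∧ Alternating π}.ncard

/-! In an alternating permutation the valleys are exactly the odd positions `1, 3, 5, …` short of
the end, so "the valley values increase" is a local condition: each valley lies below the next
one (`IsIncAlt`). The value `0` can then only sit at the first valley (position `1`) or, for even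
`n`, at the last position. In the first case deleting positions `0, 1` and standardising leaves an
increasing alternating permutation of length `n - 2`, while the value at position `0` is any of
the `n - 1` nonzero values; in the second case deleting the last entry leaves one of length
`n - 1`. Hence `incAlt n = (n - 1) incAlt (n - 2)` for odd `n`, with the extra summand
`incAlt (n - 1)` for even `n ≥ 4`, and the double factorial formulas follow by induction. -/

open Equiv
open scoped Nat

structure IsIncAlt {α : Type*} [LinearOrder α] {n : ℕ} (f : Fin n → α) : Prop where
  descent : ∀ (i : ℕ) (h : i + 1 < n), Even i → f ⟨i + 1, h⟩ < f ⟨i, by omega⟩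
  ascent : ∀ (i : ℕ) (h : i + 1 < n), Odd i → f ⟨i, by omega⟩ < f ⟨i + 1, h⟩
  valley_lt : ∀ (i : ℕ) (h : i + 3 < n), Odd i → f ⟨i, by omega⟩ < f ⟨i + 2, by omega⟩

section IsIncAlt

variable {α β : Type*} [LinearOrder α] [LinearOrder β]

theorem StrictMono.isIncAlt_comp_iff {g : α → β} (hg : StrictMono g) {n : ℕ} {f : Fin n → α} :
    IsIncAlt (g ∘ f) ↔ IsIncAlt f := by
  constructor
  · rintro ⟨hd, ha, hv⟩
    exact ⟨fun i h hi => hg.lt_iff_lt.mp (hd i h hi), fun i h hi => hg.lt_iff_lt.mp (ha i h hi),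
      fun i h hi => hg.lt_iff_lt.mp (hv i h hi)⟩
  · rintro ⟨hd, ha, hv⟩
    exact ⟨fun i h hi => hg (hd i h hi), fun i h hi => hg (ha i h hi), fun i h hi => hg (hv i h hi)⟩

namespace IsIncAlt

variable {n : ℕ} {f : Fin n → α}

theorem even_of_descent (hf : IsIncAlt f) {i : ℕ} (h : i + 1 < n)
    (hd : f ⟨i + 1, h⟩ < f ⟨i, by omega⟩) : Even i :=
  Nat.not_odd_iff_even.mp fun hi => (hf.ascent i h hi).not_gt hd

theorem lt_of_odd_of_lt (hf : IsIncAlt f) {i j : ℕ} (hi : Odd i) (hj : Odd j) (hij : i < j)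
    (hjn : j + 1 < n) : f ⟨i, by omega⟩ < f ⟨j, by omega⟩ := by
  obtain ⟨d, rfl⟩ : ∃ d, j = i + 2 * d + 2 := by
    obtain ⟨a, rfl⟩ := hi; obtain ⟨b, rfl⟩ := hj; exact ⟨b - a - 1, by omega⟩
  induction d with
  | zero => exact hf.valley_lt i (by omega) hi
  | succ d ih =>
    exact (ih (by grind) (by omega) (by omega)).trans
      (hf.valley_lt (i + 2 * d + 2) (by omega) (by grind))

theorem val_eq_one_or_of_forall_lt (hf : IsIncAlt f) (hn : 2 ≤ n) {p : Fin n}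
    (hp : ∀ j, j ≠ p → f p < f j) : p.val = 1 ∨ (Even n ∧ p.val + 1 = n) := by
  obtain ⟨k, hk⟩ := p
  have not_lt : ∀ j (hj : j < n), j ≠ k → ¬ f ⟨j, hj⟩ < f ⟨k, hk⟩ := fun j hj hjk =>
    (hp ⟨j, hj⟩ (by simpa using hjk)).not_gt
  rcases Nat.even_or_odd k with hke | hko
  · exfalso
    by_cases hkn : k + 1 < n
    · exact not_lt (k + 1) hkn (by omega) (hf.descent k hkn hke)
    · obtain ⟨j, rfl⟩ : ∃ j, k = j + 1 := ⟨k - 1, by omega⟩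
      exact not_lt j (by omega) (by omega) (hf.ascent j hk (by grind))
  · by_cases hkn : k + 1 < n
    · by_cases hk1 : k = 1
      · exact Or.inl hk1
      · obtain ⟨j, rfl⟩ : ∃ j, k = j + 2 := ⟨k - 2, by grind⟩
        exact absurd (hf.valley_lt j (by omega) (by grind)) (not_lt j (by omega) (by omega))
    · exact Or.inr ⟨by grind, show k + 1 = n by omega⟩

theorem iff_comp_succ_succ {m : ℕ} {f : Fin (m + 2) → α} (hf : ∀ j, j ≠ 1 → f 1 < f j) :
    IsIncAlt f ↔ IsIncAlt (f ∘ Fin.succ ∘ Fin.succ) := by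
  constructor
  · rintro ⟨hd, ha, hv⟩
    exact ⟨fun i h hi => hd (i + 2) (by omega) (by grind),
      fun i h hi => ha (i + 2) (by omega) (by grind),
      fun i h hi => hv (i + 2) (by omega) (by grind)⟩
  · rintro ⟨hd, ha, hv⟩
    refine ⟨fun i h hi => ?_, fun i h hi => ?_, fun i h hi => ?_⟩
    · match i, hi with
      | 0, _ => exact hf 0 (by simp)
      | 1, hi => exact absurd hi (by decide)
      | k + 2, hi => exact hd k (by omega) (by grind)
    · match i, hi with
      | 0, hi => exact absurd hi (by decide)
      | 1, _ => exact hf ⟨2, by omega⟩ (by simp [Fin.ext_iff])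
      | k + 2, hi => exact ha k (by omega) (by grind)
    · match i, hi with
      | 0, hi => exact absurd hi (by decide)
      | 1, _ => exact hf ⟨3, by omega⟩ (by simp [Fin.ext_iff])
      | k + 2, hi => exact hv k (by omega) (by grind)

theorem iff_comp_castSucc {m : ℕ} (hm : Odd m) {f : Fin (m + 1) → α}
    (hf : ∀ j, j ≠ Fin.last m → f (Fin.last m) < f j) :
    IsIncAlt f ↔ IsIncAlt (f ∘ Fin.castSucc) := by
  constructor
  · rintro ⟨hd, ha, hv⟩
    exact ⟨fun i h hi => hd i (by omega) hi, fun i h hi => ha i (by omega) hi,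
      fun i h hi => hv i (by omega) hi⟩
  · rintro ⟨hd, ha, hv⟩
    refine ⟨fun i h hi => ?_, fun i h hi => ha i (by grind) hi, fun i h hi => hv i (by grind) hi⟩
    by_cases him : i + 1 < m
    · exact hd i him hi
    · have hlast : (⟨i + 1, h⟩ : Fin (m + 1)) = Fin.last m := Fin.ext (show i + 1 = m by omega)
      rw [hlast]
      exact hf _ (Fin.ne_of_val_ne (show i ≠ m by omega))

end IsIncAlt

end IsIncAlt

theorem IsIncAlt.odd_of_isValley {n : ℕ} {π : Perm (Fin n)} (hπ : IsIncAlt π) {ℓ : Fin n}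
    (hℓ : IsValley π ℓ) : Odd ℓ.val := by
  obtain ⟨ℓ, hℓn⟩ := ℓ
  obtain ⟨h1, -, hd, -⟩ := hℓ
  obtain ⟨j, rfl⟩ : ∃ j, ℓ = j + 1 := ⟨ℓ - 1, by have : 1 ≤ ℓ := h1; omega⟩
  exact (hπ.even_of_descent hℓn hd).add_one

theorem increasing_and_alternating_iff {n : ℕ} (π : Perm (Fin n)) :
    Increasing π ∧ Alternating π ↔ IsIncAlt π := by
  constructor
  · rintro ⟨hI, hA⟩
    have hd : ∀ i (h : i + 1 < n), Even i → π ⟨i + 1, h⟩ < π ⟨i, by omega⟩ := fun i h hi => by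
      simpa [hi] using hA i h
    have ha : ∀ i (h : i + 1 < n), Odd i → π ⟨i, by omega⟩ < π ⟨i + 1, h⟩ := fun i h hi => by
      simpa [Nat.not_even_iff_odd.mpr hi] using hA i h
    have valley : ∀ i (h : i + 1 < n), Odd i → IsValley π ⟨i, by omega⟩ := by
      rintro i h ⟨k, rfl⟩
      exact ⟨by simp, h, hd (2 * k) (by omega) (even_two_mul k), ha _ h ⟨k, rfl⟩⟩
    exact ⟨hd, ha, fun i h hi =>
      hI _ _ (valley i (by omega) hi) (valley (i + 2) (by omega) (by grind)) (by simp)⟩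
  · intro hπ
    refine ⟨fun i j hi hj hij => ?_, fun i h => ?_⟩
    · exact hπ.lt_of_odd_of_lt (hπ.odd_of_isValley hi) (hπ.odd_of_isValley hj) hij hj.2.1
    · split_ifs with hi
      · exact hπ.descent i h hi
      · exact hπ.ascent i h (Nat.not_even_iff_odd.mp hi)

theorem incAlt_eq_card (n : ℕ) : incAlt n = Nat.card {π : Perm (Fin n) // IsIncAlt π} := by
  rw [incAlt, ← Nat.card_coe_set_eq]
  exact Nat.card_congr (Equiv.subtypeEquivRight increasing_and_alternating_iff)

namespace Equiv.Perm

variable {m : ℕ}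

def subtypeApplyEqEquiv (a b : Fin (m + 1)) : {π : Perm (Fin (m + 1)) // π a = b} ≃ Perm (Fin m) :=
  ((Equiv.subtypeEquiv ((finSuccEquiv' a).equivCongr (Equiv.refl _)) fun π => by simp).trans
    (optionSubtype b)).trans ((Equiv.refl _).equivCongr (finSuccAboveEquiv b).symm)

theorem succAbove_subtypeApplyEqEquiv_apply (a b : Fin (m + 1))
    (π : {π : Perm (Fin (m + 1)) // π a = b}) (i : Fin m) : b.succAbove (subtypeApplyEqEquiv a b π i) = π.1 (a.succAbove i) := by
  change (finSuccAboveEquiv b ((finSuccAboveEquiv b).symm _)).1 = _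
  rw [Equiv.apply_symm_apply]
  simp [Equiv.subtypeEquiv, Equiv.equivCongr]

end Equiv.Perm

theorem Nat.card_subtype_eq_sum_card_fiber {α β : Type*} [Finite α] [Fintype β] (f : α → β)
    (p : α → Prop) : Nat.card {x // p x} = ∑ b, Nat.card {x // f x = b ∧ p x} := by
  rw [← Nat.card_congr (Equiv.sigmaFiberEquiv fun x : {x // p x} => f x), Nat.card_sigma]
  refine Finset.sum_congr rfl fun b _ => Nat.card_congr ?_
  exact (Equiv.subtypeSubtypeEquivSubtypeInter p (f · = b)).trans
    (Equiv.subtypeEquivRight fun _ => and_comm)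

namespace Equiv.Perm

variable {m : ℕ}

theorem card_subtype_apply_eq_and (a b : Fin (m + 1)) {p : Perm (Fin (m + 1)) → Prop}
    {q : Perm (Fin m) → Prop}
    (h : ∀ π σ, π a = b → (∀ i, π (a.succAbove i) = b.succAbove (σ i)) → (p π ↔ q σ)) :
    Nat.card {π // π a = b ∧ p π} = Nat.card {σ // q σ} := by
  rw [← Nat.card_congr (Equiv.subtypeSubtypeEquivSubtypeInter _ p)]
  exact Nat.card_congr (Equiv.subtypeEquiv (subtypeApplyEqEquiv a b) fun π =>
    h π.1 _ π.2 fun i => (succAbove_subtypeApplyEqEquiv_apply a b π i).symm)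

end Equiv.Perm

theorem card_isIncAlt_apply_one_eq_zero (m : ℕ) :
    Nat.card {π : Perm (Fin (m + 2)) // π 1 = 0 ∧ IsIncAlt π} = (m + 1) * incAlt m := by
  have hdrop : Nat.card {π : Perm (Fin (m + 2)) // π 1 = 0 ∧ IsIncAlt π} =
      Nat.card {τ : Perm (Fin (m + 1)) // IsIncAlt (τ ∘ Fin.succ)} := by
    refine Perm.card_subtype_apply_eq_and _ _ fun π τ hπ hπτ => ?_
    have hmin : ∀ j, j ≠ 1 → π 1 < π j := fun j hj => by
      rw [hπ, Fin.pos_iff_ne_zero, ← hπ]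
      exact π.injective.ne hj
    have hcomp : π ∘ Fin.succ ∘ Fin.succ = Fin.succ ∘ τ ∘ Fin.succ := funext fun j => by
      simpa using hπτ j.succ
    rw [IsIncAlt.iff_comp_succ_succ hmin, hcomp, Fin.strictMono_succ.isIncAlt_comp_iff]
  have hfiber (w : Fin (m + 1)) :
      Nat.card {τ : Perm (Fin (m + 1)) // τ 0 = w ∧ IsIncAlt (τ ∘ Fin.succ)} = incAlt m := by
    rw [incAlt_eq_card]
    refine Perm.card_subtype_apply_eq_and _ _ fun τ σ _ hτσ => ?_
    have hcomp : τ ∘ Fin.succ = w.succAbove ∘ σ := funext fun i => by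
      simpa using hτσ i
    rw [hcomp, (Fin.strictMono_succAbove w).isIncAlt_comp_iff]
  rw [hdrop, Nat.card_subtype_eq_sum_card_fiber (fun τ : Perm (Fin (m + 1)) => τ 0)]
  simp only [hfiber, Finset.sum_const, Finset.card_univ, Fintype.card_fin, smul_eq_mul]

theorem card_isIncAlt_apply_last_eq_zero {m : ℕ} (hm : Odd m) :
    Nat.card {π : Perm (Fin (m + 1)) // π (Fin.last m) = 0 ∧ IsIncAlt π} = incAlt m := by
  rw [incAlt_eq_card]
  refine Perm.card_subtype_apply_eq_and _ _ fun π σ hπ hπσ => ?_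
  have hmin : ∀ j, j ≠ Fin.last m → π (Fin.last m) < π j := fun j hj => by
    rw [hπ, Fin.pos_iff_ne_zero, ← hπ]
    exact π.injective.ne hj
  have hcomp : π ∘ Fin.castSucc = Fin.succ ∘ σ := funext fun i => by
    simpa using hπσ i
  rw [IsIncAlt.iff_comp_castSucc hm hmin, hcomp, Fin.strictMono_succ.isIncAlt_comp_iff]

theorem IsIncAlt.apply_one_eq_zero_or {m : ℕ} {π : Perm (Fin (m + 2))} (hπ : IsIncAlt π) :
    π 1 = 0 ∨ (Even m ∧ π (Fin.last (m + 1)) = 0) := by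
  have hmin : ∀ j, j ≠ π.symm 0 → π (π.symm 0) < π j := fun j hj => by
    rw [π.apply_symm_apply, Fin.pos_iff_ne_zero, ← π.apply_symm_apply 0]
    exact π.injective.ne hj
  rcases hπ.val_eq_one_or_of_forall_lt (by omega) hmin with h | ⟨he, hl⟩
  · left
    have hp : π.symm 0 = 1 := Fin.ext (h.trans (Fin.val_one m).symm)
    rw [← hp, π.apply_symm_apply]
  · right
    refine ⟨by simpa [parity_simps] using he, ?_⟩
    have hp : π.symm 0 = Fin.last (m + 1) := Fin.ext (show (π.symm 0).val = m + 1 by omega)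
    rw [← hp, π.apply_symm_apply]

theorem incAlt_add_two {m : ℕ} (hm : Odd m ∨ m = 0) : incAlt (m + 2) = (m + 1) * incAlt m := by
  rw [← card_isIncAlt_apply_one_eq_zero, incAlt_eq_card]
  refine Nat.card_congr (Equiv.subtypeEquivRight fun π => ⟨fun hπ => ⟨?_, hπ⟩, And.right⟩)
  rcases hπ.apply_one_eq_zero_or with h | ⟨he, hl⟩
  · exact h
  · obtain rfl : m = 0 := hm.resolve_left (Nat.not_odd_iff_even.mpr he)
    exact hl

theorem incAlt_add_four {m : ℕ} (hm : Even m) :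
    incAlt (m + 4) = (m + 3) * incAlt (m + 2) + incAlt (m + 3) := by
  classical
  rw [← card_isIncAlt_apply_one_eq_zero, ← card_isIncAlt_apply_last_eq_zero (m := m + 3) (by grind),
    incAlt_eq_card, ← Nat.card_sum]
  refine Nat.card_congr ((Equiv.subtypeEquivRight fun π => ?_).trans
    (subtypeOrEquiv _ _ ?_))
  · constructor
    · intro hπ
      rcases hπ.apply_one_eq_zero_or with h | ⟨-, hl⟩
      · exact Or.inl ⟨h, hπ⟩
      · exact Or.inr ⟨hl, hπ⟩
    · rintro (⟨-, hπ⟩ | ⟨-, hπ⟩) <;> exact hπ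
  · refine Pi.disjoint_iff.mpr fun π => Prop.disjoint_iff.mpr fun ⟨⟨h1, _⟩, ⟨hl, _⟩⟩ => ?_
    have := π.injective (h1.trans hl.symm)
    simp [Fin.ext_iff] at this

theorem incAlt_of_le_one {n : ℕ} (hn : n ≤ 1) : incAlt n = 1 := by
  have hall : ∀ π : Perm (Fin n), IsIncAlt π :=
    fun _ => ⟨fun i h => by omega, fun i h => by omega, fun i h => by omega⟩
  rw [incAlt_eq_card, Nat.card_congr (Equiv.subtypeUnivEquiv hall), Nat.card_perm, Nat.card_fin]
  interval_cases n <;> rfl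

theorem incAlt_two_mul_add_one (m : ℕ) : incAlt (2 * m + 1) = (2 * m)‼ := by
  induction m with
  | zero => exact incAlt_of_le_one le_rfl
  | succ m ih =>
    rw [show 2 * (m + 1) + 1 = 2 * m + 1 + 2 by ring,
      incAlt_add_two (Or.inl (odd_two_mul_add_one m)), ih, show 2 * (m + 1) = 2 * m + 2 by ring, Nat.doubleFactorial_add_two]

theorem incAlt_two_mul_add_two_add (m : ℕ) : incAlt (2 * m + 2) + (2 * m + 1)‼ = (2 * m + 2)‼ := by
  induction m with
  | zero => rw [incAlt_add_two (Or.inr rfl), incAlt_of_le_one zero_le_one]; rfl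
  | succ m ih =>
    have hodd : incAlt (2 * m + 3) = (2 * m + 2)‼ := incAlt_two_mul_add_one (m + 1)
    calc incAlt (2 * m + 4) + (2 * m + 3)‼
        = (2 * m + 3) * (incAlt (2 * m + 2) + (2 * m + 1)‼) + incAlt (2 * m + 3) := by
          rw [incAlt_add_four (even_two_mul m), Nat.doubleFactorial_add_two (2 * m + 1)]; ring
      _ = (2 * m + 2 + 2)‼ := by rw [ih, hodd, Nat.doubleFactorial_add_two (2 * m + 2)]; ring

theorem incAlt_count :
    (∀ n : ℕ, Odd n → incAlt n = Nat.doubleFactorial (n - 1)) ∧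
    (∀ n : ℕ, Even n → 0 < n →
      incAlt n = Nat.doubleFactorial n - Nat.doubleFactorial (n - 1)) ∧
    incAlt 0 = 1 ∧ incAlt 1 = 1 ∧ incAlt 2 = 1 ∧ incAlt 3 = 2 ∧ incAlt 4 = 5 ∧
    incAlt 5 = 8 ∧ incAlt 6 = 33 ∧ incAlt 7 = 48 ∧ incAlt 8 = 279 := by
  have hodd : ∀ n : ℕ, Odd n → incAlt n = Nat.doubleFactorial (n - 1) := by
    rintro _ ⟨m, rfl⟩
    exact incAlt_two_mul_add_one m
  have heven : ∀ n : ℕ, Even n → 0 < n →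
      incAlt n = Nat.doubleFactorial n - Nat.doubleFactorial (n - 1) := by
    rintro _ ⟨k, rfl⟩ hk
    obtain ⟨m, rfl⟩ : ∃ m, k = m + 1 := ⟨k - 1, by omega⟩
    have := incAlt_two_mul_add_two_add m
    rw [show m + 1 + (m + 1) = 2 * m + 2 by ring, show 2 * m + 2 - 1 = 2 * m + 1 by omega]
    omega
  refine ⟨hodd, heven, incAlt_of_le_one (Nat.zero_le 1), incAlt_of_le_one le_rfl,
    ?_, ?_, ?_, ?_, ?_, ?_, ?_⟩
  all_goals first
    | rw [hodd _ (by decide)]; rfl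
    | rw [heven _ (by decide) (by decide)]; rfl
end

section
/- For n ≥ 2, the number of flattened permutations of {1,...,n} with no valleys equals n − 1. -/
open Finset

/-- Auxiliary characterization: adjacent increases on the prefix, plus first < last. -/
def CondAux {n : ℕ} (π : Equiv.Perm (Fin n)) : Prop :=
  (∀ i : ℕ, ∀ _h : i + 2 < n, π ⟨i, by omega⟩ < π ⟨i + 1, by omega⟩) ∧
  (∀ h : 0 < n, π ⟨0, h⟩ < π ⟨n - 1, by omega⟩)

lemma chainAux {n : ℕ} (π : Equiv.Perm (Fin n))
    (A : ∀ i : ℕ, ∀ _h : i + 2 < n, π ⟨i, by omega⟩ < π ⟨i + 1, by omega⟩) :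
    ∀ j : ℕ, ∀ hj : j + 1 < n, ∀ i : ℕ, ∀ hi : i < j,
      π ⟨i, by omega⟩ < π ⟨j, by omega⟩ := by
  intro j
  induction j with
  | zero => intro _ i hi; omega
  | succ k ih =>
    intro hj i hi
    have hk : π ⟨k, by omega⟩ < π ⟨k + 1, by omega⟩ := A k (by omega)
    rcases Nat.lt_or_ge i k with h | h
    · exact (ih (by omega) i h).trans hk
    · have : i = k := by omega
      subst this; exact hk

lemma memIffAux {n : ℕ} (hn : 2 ≤ n) (π : Equiv.Perm (Fin n)) :
    (Flattened π ∧ valCount π = 0) ↔ CondAux π := by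
  constructor
  · rintro ⟨hF, hV⟩
    have hnoval : ∀ ℓ, ¬ IsValley π ℓ := by
      rw [valCount, Set.ncard_eq_zero (Set.toFinite _)] at hV
      exact Set.eq_empty_iff_forall_notMem.mp hV
    have A : ∀ i : ℕ, ∀ _h : i + 2 < n, π ⟨i, by omega⟩ < π ⟨i + 1, by omega⟩ := by
      intro i h
      by_contra hlt
      have hne : π ⟨i + 1, by omega⟩ ≠ π ⟨i, by omega⟩ := by
        intro e
        have := π.injective e
        simp [Fin.ext_iff] at this
      have h1 : π ⟨i + 1, by omega⟩ < π ⟨i, by omega⟩ :=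
        lt_of_le_of_ne (not_lt.mp hlt) hne
      have h3 : π ⟨i + 2, by omega⟩ < π ⟨i + 1, by omega⟩ := by
        by_contra hlt2
        have hne2 : π ⟨i + 1, by omega⟩ ≠ π ⟨i + 2, by omega⟩ := by
          intro e
          have := π.injective e
          simp [Fin.ext_iff] at this
        have : π ⟨i + 1, by omega⟩ < π ⟨i + 2, by omega⟩ :=
          lt_of_le_of_ne (not_lt.mp hlt2) hne2
        exact hnoval ⟨i + 1, by omega⟩ ⟨by simp, (show i + 1 + 1 < n by omega), h1, this⟩
      have r1 : IsRunStart π ⟨i + 1, by omega⟩ := Or.inr h1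
      have r2 : IsRunStart π ⟨i + 2, by omega⟩ := Or.inr h3
      have := hF _ _ r1 r2 (by simp [Fin.lt_def])
      exact absurd this (not_lt.mpr h3.le)
    refine ⟨A, ?_⟩
    intro h0
    by_cases hB : π ⟨n - 2, by omega⟩ < π ⟨n - 1, by omega⟩
    · rcases Nat.eq_or_lt_of_le hn with h2 | h2
      · subst h2; exact hB
      · exact (chainAux π A (n - 2) (by omega) 0 (by omega)).trans hB
    · have hne : π ⟨n - 1, by omega⟩ ≠ π ⟨n - 2, by omega⟩ := by
        intro e
        have := π.injective e
        simp [Fin.ext_iff] at this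
        omega
      have hB' : π ⟨n - 1, by omega⟩ < π ⟨n - 2, by omega⟩ :=
        lt_of_le_of_ne (not_lt.mp hB) hne
      have r0 : IsRunStart π ⟨0, by omega⟩ := Or.inl rfl
      have r1 : IsRunStart π ⟨n - 1, by omega⟩ := Or.inr hB'
      exact hF _ _ r0 r1 (by simp [Fin.lt_def]; omega)
  · rintro ⟨A, B⟩
    constructor
    · intro i j ri rj hij
      have hij' : i.val < j.val := hij
      have hjlt := j.isLt
      have hjv : j.val = n - 1 := by
        by_contra hne
        rcases rj with h0 | hgt
        · omega
        · have hA := A (j.val - 1) (by omega)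
          have e : (⟨j.val - 1 + 1, by omega⟩ : Fin n) = ⟨j.val, j.isLt⟩ := by
            simp only [Fin.mk.injEq]; omega
          rw [e] at hA
          exact absurd hA (not_lt.mpr hgt.le)
      have hiv : i.val = 0 := by
        by_contra hne
        rcases ri with h0 | hgt
        · exact hne h0
        · have hA := A (i.val - 1) (by omega)
          have e : (⟨i.val - 1 + 1, by omega⟩ : Fin n) = ⟨i.val, i.isLt⟩ := by
            simp only [Fin.mk.injEq]; omega
          rw [e] at hA
          exact absurd hA (not_lt.mpr hgt.le)
      have ei : i = ⟨0, by omega⟩ := Fin.ext hiv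
      have ej : j = ⟨n - 1, by omega⟩ := Fin.ext hjv
      rw [ei, ej]
      exact B (by omega)
    · rw [valCount, Set.ncard_eq_zero (Set.toFinite _)]
      apply Set.eq_empty_iff_forall_notMem.mpr
      rintro ℓ ⟨h1, h2, hgt, _hlt⟩
      have hA := A (ℓ.val - 1) (by omega)
      have e : (⟨ℓ.val - 1 + 1, by omega⟩ : Fin n) = ℓ := by
        apply Fin.ext; simp; omega
      rw [e] at hA
      exact absurd hA (not_lt.mpr hgt.le)

lemma uniqAux {n : ℕ} (hn : 2 ≤ n) (π π' : Equiv.Perm (Fin n))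
    (h : CondAux π) (h' : CondAux π')
    (he : π ⟨n - 1, by omega⟩ = π' ⟨n - 1, by omega⟩) : π = π' := by
  set a : Fin n := π ⟨n - 1, by omega⟩ with ha_def
  have hcard : ({a}ᶜ : Finset (Fin n)).card = n - 1 := by
    simp [Finset.card_compl]
  have key : ∀ (σ : Equiv.Perm (Fin n)), CondAux σ → σ ⟨n - 1, by omega⟩ = a →
      ∀ i : Fin (n - 1), σ ⟨i.val, by omega⟩ =
        ({a}ᶜ : Finset (Fin n)).orderEmbOfFin hcard i := by
    intro σ hσ ha i
    have hm : StrictMono (fun i : Fin (n - 1) => σ ⟨i.val, by omega⟩) := by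
      intro i j hij
      exact chainAux σ hσ.1 j.val (by omega) i.val hij
    have hmem : ∀ i : Fin (n - 1),
        (fun i : Fin (n - 1) => σ ⟨i.val, by omega⟩) i ∈ ({a}ᶜ : Finset (Fin n)) := by
      intro i
      simp only [Finset.mem_compl, Finset.mem_singleton]
      intro e
      rw [← ha] at e
      have h2 := σ.injective e
      have h3 := i.isLt
      simp only [Fin.mk.injEq] at h2
      omega
    have := Finset.orderEmbOfFin_unique hcard hmem hm
    exact congrFun this i
  apply Equiv.ext
  intro x
  by_cases hx : x.val < n - 1
  · have h1 := key π h rfl ⟨x.val, hx⟩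
    have h2 := key π' h' he.symm ⟨x.val, hx⟩
    exact h1.trans h2.symm
  · have ex : x = ⟨n - 1, by omega⟩ := by
      apply Fin.ext; simp; omega
    rw [ex]
    exact he

def ffun (n : ℕ) (a : Fin n) : Fin n → Fin n := fun i =>
  if _h : i.val + 1 = n then a
  else if i.val < a.val then i else ⟨i.val + 1, by omega⟩

lemma ffun_val (n : ℕ) (a : Fin n) (i : ℕ) (h : i < n) :
    (ffun n a ⟨i, h⟩).val =
      if i + 1 = n then a.val else if i < a.val then i else i + 1 := by
  unfold ffun
  split_ifs <;> rfl

lemma ffun_inj (n : ℕ) (a : Fin n) : Function.Injective (ffun n a) := by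
  intro i j hh
  have h' := congrArg Fin.val hh
  rw [show i = (⟨i.val, i.isLt⟩ : Fin n) from rfl, show j = (⟨j.val, j.isLt⟩ : Fin n) from rfl] at h'
  unfold ffun at h'
  have hi := i.isLt
  have hj := j.isLt
  have ha := a.isLt
  apply Fin.ext
  simp only [Fin.mk.injEq] at *
  split_ifs at h' <;> simp_all <;> omega

noncomputable def FFperm (n : ℕ) (a : Fin n) : Equiv.Perm (Fin n) :=
  Equiv.ofBijective (ffun n a) ((Finite.injective_iff_bijective).mp (ffun_inj n a))

lemma FFperm_apply (n : ℕ) (a : Fin n) (i : Fin n) : FFperm n a i = ffun n a i := rfl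

lemma FFperm_last (n : ℕ) (hn : 2 ≤ n) (a : Fin n) :
    FFperm n a ⟨n - 1, by omega⟩ = a := by
  apply Fin.ext
  rw [FFperm_apply, ffun_val]
  rw [if_pos (by omega)]

lemma FFperm_cond (n : ℕ) (hn : 2 ≤ n) (a : Fin n) (ha : 0 < a.val) :
    CondAux (FFperm n a) := by
  have haLt := a.isLt
  constructor
  · intro i h
    rw [Fin.lt_def, FFperm_apply, FFperm_apply, ffun_val, ffun_val]
    split_ifs <;> omega
  · intro h0
    rw [Fin.lt_def, FFperm_apply, FFperm_apply, ffun_val, ffun_val]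
    split_ifs <;> omega

theorem flattened_no_valley_count (n : ℕ) (hn : 2 ≤ n) :
    {π : Equiv.Perm (Fin n) | Flattened π ∧ valCount π = 0}.ncard = n - 1 := by
  have hset : {π : Equiv.Perm (Fin n) | Flattened π ∧ valCount π = 0}
      = FFperm n '' {a : Fin n | 0 < a.val} := by
    ext π
    simp only [Set.mem_setOf_eq, Set.mem_image]
    rw [memIffAux hn]
    constructor
    · intro h
      refine ⟨π ⟨n - 1, by omega⟩, ?_, ?_⟩
      · have hB := h.2 (by omega)
        have : (π ⟨0, by omega⟩).val < (π ⟨n - 1, by omega⟩).val := hB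
        show 0 < (π ⟨n - 1, by omega⟩).val
        omega
      · exact uniqAux hn _ _
          (FFperm_cond n hn _ (by
            have hB := h.2 (by omega)
            have : (π ⟨0, by omega⟩).val < (π ⟨n - 1, by omega⟩).val := hB
            omega)) h
          (by rw [FFperm_last n hn])
    · rintro ⟨a, ha, rfl⟩
      exact FFperm_cond n hn a ha
  rw [hset]
  rw [Set.ncard_image_of_injOn (fun a _ b _ hab => by
    rw [← FFperm_last n hn a, ← FFperm_last n hn b, hab])]
  have : {a : Fin n | 0 < a.val}
      = ↑((Finset.univ : Finset (Fin n)).erase ⟨0, by omega⟩) := by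
    ext a
    simp only [Set.mem_setOf_eq, Finset.coe_erase, Finset.coe_univ, Set.mem_diff,
      Set.mem_univ, true_and, Set.mem_singleton_iff, Fin.ext_iff]
    omega
  rw [this, Set.ncard_coe_finset, Finset.card_erase_of_mem (Finset.mem_univ _),
    Finset.card_univ, Fintype.card_fin]
end

section
/- In a flattened permutation, the number of runs equals one plus the number of peaks; i.e., for every nonempty flattened permutation π, run(π) = 1 + peak(π). -/
open Finset

theorem flattened_run_eq_one_add_peak (n : ℕ) (hn : 1 ≤ n) (π : Equiv.Perm (Fin n))
    (hπ : Flattened π) : runCount π = 1 + peakCount π := by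
  classical
  set D : Set (Fin n) := {ℓ : Fin n | ∃ h : ℓ.val + 1 < n, π ⟨ℓ.val + 1, h⟩ < π ℓ} with hD
  -- Step 1: peaks = descents (under flattened hypothesis)
  have hPD : {ℓ : Fin n | IsPeak π ℓ} = D := by
    ext ℓ
    simp only [Set.mem_setOf_eq, hD, IsPeak]
    constructor
    · rintro ⟨h1, h2, _, h4⟩; exact ⟨h2, h4⟩
    · rintro ⟨h2, h4⟩
      have hrs : IsRunStart π ⟨ℓ.val + 1, h2⟩ := by
        right
        simpa using h4
      have hnot : ¬ IsRunStart π ℓ := by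
        intro hℓ
        have := hπ ℓ ⟨ℓ.val + 1, h2⟩ hℓ hrs (by simp [Fin.lt_def])
        exact absurd this (not_lt.mpr h4.le)
      rw [IsRunStart] at hnot
      push_neg at hnot
      obtain ⟨h0, hle⟩ := hnot
      have h1 : 1 ≤ ℓ.val := Nat.one_le_iff_ne_zero.mpr h0
      refine ⟨h1, h2, ?_, h4⟩
      rcases lt_or_eq_of_le hle with h | h
      · exact h
      · exfalso
        have := π.injective h
        have : ℓ.val - 1 = ℓ.val := congrArg Fin.val this
        omega
  -- Step 2: run starts = {0} ∪ succ '' D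
  set s : Fin n → Fin n := fun ℓ => if h : ℓ.val + 1 < n then ⟨ℓ.val + 1, h⟩ else ℓ with hs
  set d : Fin n := ⟨0, hn⟩ with hd
  have hS : {ℓ : Fin n | IsRunStart π ℓ} = insert d (s '' D) := by
    ext x
    simp only [Set.mem_setOf_eq, Set.mem_insert_iff, Set.mem_image, IsRunStart]
    constructor
    · rintro (h0 | hgt)
      · left; exact Fin.ext h0
      · right
        have hx1 : 1 ≤ x.val := by
          by_contra h
          have hx0 : x.val = 0 := by omega
          have : (⟨x.val - 1, lt_of_le_of_lt (Nat.sub_le _ _) x.isLt⟩ : Fin n) = x :=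
            Fin.ext (by simp only [Fin.val_mk]; omega)
          rw [this] at hgt
          exact lt_irrefl _ hgt
        have hlt' : x.val - 1 + 1 < n := by omega
        refine ⟨⟨x.val - 1, lt_of_le_of_lt (Nat.sub_le _ _) x.isLt⟩, ⟨hlt', ?_⟩, ?_⟩
        · have hx : (⟨x.val - 1 + 1, hlt'⟩ : Fin n) = x := Fin.ext (by
            simp only [Fin.val_mk]; omega)
          show π ⟨x.val - 1 + 1, hlt'⟩ < π ⟨x.val - 1, _⟩
          rw [hx]; exact hgt
        · simp only [hs]
          rw [dif_pos hlt']
          exact Fin.ext (by simp only [Fin.val_mk]; omega)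
    · rintro (rfl | ⟨ℓ, ⟨h2, hlt⟩, hsl⟩)
      · left; rfl
      · have hx : x = ⟨ℓ.val + 1, h2⟩ := by
          rw [← hsl]; simp only [hs]; rw [dif_pos h2]
        subst hx
        right
        simpa using hlt
  have hdnot : d ∉ s '' D := by
    rintro ⟨ℓ, ⟨h2, _⟩, hsl⟩
    simp only [hs] at hsl
    rw [dif_pos h2] at hsl
    have := congrArg Fin.val hsl
    simp [hd] at this
  have hinj : Set.InjOn s D := by
    rintro a ⟨ha, _⟩ b ⟨hb, _⟩ hab
    simp only [hs] at hab
    rw [dif_pos ha, dif_pos hb] at hab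
    have := congrArg Fin.val hab
    simp at this
    exact Fin.ext this
  rw [runCount, peakCount, hPD, hS,
    Set.ncard_insert_of_notMem hdnot (Set.toFinite _),
    Set.ncard_image_of_injOn hinj, add_comm]
end

section
/- For n, k ≥ 1, the number of flattened permutations of {1,...,n} with exactly k right-to-left minima equals the Stirling number of the second kind S(n−1, k−1). -/
open Finset

/-- Stirling numbers of the second kind. -/
def stirling2 : ℕ → ℕ → ℕ
  | 0, 0 => 1
  | 0, _+1 => 0
  | _+1, 0 => 0
  | n+1, k+1 => (k+1) * stirling2 n (k+1) + stirling2 n k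

/-!
Inserting the maximum `n + 2` at position `p` of `σ ∈ S_{n+1}` is a bijection
`S_{n+1} × Fin (n + 2) ≃ S_{n+2}`. Flattened permutations are exactly those whose run starts are
all right-to-left minima, and the inserted maximum starts a descent, so the result is flattened
iff `σ` is, `p ≠ 0`, and the entry of `σ` pushed right by the maximum is a right-to-left minimum
of `σ` (or `p` is the last position). Only the insertion at the end creates a new right-to-left
minimum. A flattened `σ` with `k + 1` right-to-left minima (one of them at position `0`) thus has
`k` insertion positions keeping the count and one raising it, which is the Stirling recurrence
`S(n + 1, k + 1) = (k + 1) S(n, k + 1) + S(n, k)`.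
-/

open Equiv

theorem ncard_setOf_eq_sum_ite {α : Type*} [Fintype α] (p : α → Prop) [DecidablePred p] :
    {a | p a}.ncard = ∑ a, if p a then 1 else 0 := by
  rw [Set.ncard_eq_toFinset_card', Set.toFinset_ofPred, Finset.sum_boole, Nat.cast_id]

section RunsAndMinima

variable {n : ℕ} (π : Perm (Fin n))

theorem isRunStart_iff {q : Fin n} :
    IsRunStart π q ↔ ∀ r : Fin n, r.val + 1 = q.val → π q < π r := by
  constructor
  · rintro (hq | hq) r hr
    · omega
    · rwa [show r = ⟨q.val - 1, by omega⟩ from Fin.ext (by simp only; omega)]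
  · intro h
    by_cases hq : q.val = 0
    · exact .inl hq
    · exact .inr (h _ (by simp only; omega))

theorem rlmCount_eq_sum [DecidablePred (IsRLMin π)] :
    rlmCount π = ∑ i, if IsRLMin π i then 1 else 0 :=
  ncard_setOf_eq_sum_ite _

variable {π}

theorem Flattened.le_of_isRunStart (hπ : Flattened π) {j : Fin n} (hj : IsRunStart π j) :
    ∀ q, j ≤ q → π j ≤ π q := by
  intro q
  induction q using WellFoundedLT.induction with
  | _ q ih =>
    intro hjq
    obtain rfl | hjq := eq_or_lt_of_le hjq
    · exact le_rfl
    by_cases hq : IsRunStart π q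
    · exact (hπ j q hj hq hjq).le
    · obtain ⟨r, hrq, hr⟩ : ∃ r : Fin n, r.val + 1 = q.val ∧ π r ≤ π q := by
        simpa [isRunStart_iff] using hq
      exact (ih r (by omega) (by omega)).trans hr

theorem flattened_iff_forall_isRunStart_isRLMin :
    Flattened π ↔ ∀ j, IsRunStart π j → IsRLMin π j := by
  refine ⟨fun hπ j hj q hjq => ?_, fun h i j hi _ hij => h i hi j hij⟩
  exact (hπ.le_of_isRunStart hj q hjq.le).lt_of_ne (π.injective.ne hjq.ne)

theorem isRLMin_last (π : Perm (Fin (n + 1))) : IsRLMin π (Fin.last n) :=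
  fun j hj => absurd hj (Fin.le_last j).not_gt

theorem rlmCount_pos (π : Perm (Fin (n + 1))) : 0 < rlmCount π :=
  (Set.ncard_pos).mpr ⟨_, isRLMin_last π⟩

theorem Flattened.isRLMin_zero {π : Perm (Fin (n + 1))} (hπ : Flattened π) : IsRLMin π 0 :=
  flattened_iff_forall_isRunStart_isRLMin.mp hπ 0 (.inl rfl)

end RunsAndMinima

section InsertMax

variable {n : ℕ}

def insertMax (σ : Perm (Fin (n + 1))) (p : Fin (n + 2)) : Perm (Fin (n + 2)) :=
  (finSuccEquiv' p).trans ((optionCongr σ).trans (finSuccEquiv' (Fin.last (n + 1))).symm)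

variable (σ : Perm (Fin (n + 1))) (p : Fin (n + 2))

@[simp]
theorem insertMax_self : insertMax σ p p = Fin.last (n + 1) := by
  simp [insertMax]

@[simp]
theorem insertMax_succAbove (j : Fin (n + 1)) :
    insertMax σ p (p.succAbove j) = (σ j).castSucc := by
  simp [insertMax]

theorem insertMax_injective :
    Function.Injective fun x : Perm (Fin (n + 1)) × Fin (n + 2) => insertMax x.1 x.2 := by
  rintro ⟨σ, p⟩ ⟨σ', p'⟩ h
  simp only at h
  obtain rfl : p = p' := (insertMax σ' p').injective <| by
    rw [insertMax_self, ← h, insertMax_self]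
  obtain rfl : σ = σ' := Equiv.ext fun j => Fin.castSucc_injective _ <| by
    rw [← insertMax_succAbove, ← insertMax_succAbove, h]
  rfl

noncomputable def insertMaxEquiv : Perm (Fin (n + 1)) × Fin (n + 2) ≃ Perm (Fin (n + 2)) :=
  .ofBijective _ <| (Fintype.bijective_iff_injective_and_card _).mpr
    ⟨insertMax_injective, by
      simp only [Fintype.card_prod, Fintype.card_perm, Fintype.card_fin, Nat.factorial_succ (n + 1)]
      ring⟩

theorem isRunStart_insertMax_self : IsRunStart (insertMax σ p) p ↔ p = 0 := by
  rw [IsRunStart, insertMax_self, Fin.ext_iff]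
  simp [(Fin.le_last _).not_gt]

theorem val_succAbove_add_one_eq_iff (i j : Fin (n + 1)) :
    (p.succAbove i).val + 1 = (p.succAbove j).val ↔ i.val + 1 = j.val ∧ j.val ≠ p.val := by
  simp only [Fin.succAbove, Fin.lt_def, Fin.val_castSucc]
  split_ifs <;> simp <;> omega

theorem isRunStart_insertMax_succAbove (j : Fin (n + 1)) :
    IsRunStart (insertMax σ p) (p.succAbove j) ↔ j.castSucc = p ∨ IsRunStart σ j := by
  simp only [isRunStart_iff, Fin.forall_iff_succAbove p, insertMax_self, insertMax_succAbove,
    Fin.castSucc_lt_last, implies_true, true_and, Fin.castSucc_lt_castSucc_iff,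
    val_succAbove_add_one_eq_iff, and_imp, Fin.ext_iff, Fin.val_castSucc]
  by_cases hj : j.val = p.val <;> simp [hj]

theorem isRLMin_insertMax_self : IsRLMin (insertMax σ p) p ↔ p = Fin.last (n + 1) := by
  refine ⟨fun h => ?_, fun h j hj => absurd (h ▸ hj) (Fin.le_last j).not_gt⟩
  by_contra hp
  exact (Fin.le_last _).not_gt (insertMax_self σ p ▸ h _ (Fin.lt_last_iff_ne_last.mpr hp))

theorem isRLMin_insertMax_succAbove (j : Fin (n + 1)) :
    IsRLMin (insertMax σ p) (p.succAbove j) ↔ IsRLMin σ j := by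
  simp only [IsRLMin, Fin.forall_iff_succAbove p, insertMax_self, insertMax_succAbove,
    Fin.castSucc_lt_last, implies_true, true_and, Fin.castSucc_lt_castSucc_iff,
    Fin.succAbove_lt_succAbove_iff]

theorem flattened_insertMax_iff :
    Flattened (insertMax σ p) ↔
      p ≠ 0 ∧ Flattened σ ∧ ∀ j : Fin (n + 1), j.castSucc = p → IsRLMin σ j := by
  simp only [flattened_iff_forall_isRunStart_isRLMin, Fin.forall_iff_succAbove p,
    isRunStart_insertMax_self, isRLMin_insertMax_self, isRunStart_insertMax_succAbove,
    isRLMin_insertMax_succAbove, or_imp, forall_and]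
  have h0last : (0 : Fin (n + 2)) ≠ Fin.last (n + 1) := Fin.last_pos.ne
  constructor
  · rintro ⟨h0, hp, hσ⟩
    exact ⟨fun h => h0last (h ▸ h0 h), hσ, hp⟩
  · rintro ⟨h0, hσ, hp⟩
    exact ⟨fun h => absurd h h0, hp, hσ⟩

theorem rlmCount_insertMax :
    rlmCount (insertMax σ p) = rlmCount σ + if p = Fin.last (n + 1) then 1 else 0 := by
  classical
  rw [rlmCount_eq_sum, Fin.sum_univ_succAbove _ p, rlmCount_eq_sum, add_comm]
  simp only [isRLMin_insertMax_self, isRLMin_insertMax_succAbove]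

end InsertMax

noncomputable def flatRLMinCount (n k : ℕ) : ℕ :=
  {π : Perm (Fin n) | Flattened π ∧ rlmCount π = k}.ncard

theorem Flattened.sum_ite_ne_zero_isRLMin {n : ℕ} {σ : Perm (Fin (n + 1))} (hσ : Flattened σ)
    [DecidablePred (IsRLMin σ)] :
    ∑ j, (if j ≠ 0 ∧ IsRLMin σ j then 1 else 0) = rlmCount σ - 1 := by
  rw [rlmCount_eq_sum, Fin.sum_univ_succ, Fin.sum_univ_succ, if_pos hσ.isRLMin_zero]
  simp [Fin.succ_ne_zero]

open scoped Classical in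
theorem sum_ite_flattened_insertMax {n : ℕ} (σ : Perm (Fin (n + 1))) (k : ℕ) :
    ∑ p, (if Flattened (insertMax σ p) ∧ rlmCount (insertMax σ p) = k + 1 then 1 else 0) =
      (if Flattened σ ∧ rlmCount σ = k + 1 then k else 0) +
        if Flattened σ ∧ rlmCount σ = k then 1 else 0 := by
  rw [Fin.sum_univ_castSucc]
  simp only [flattened_insertMax_iff, rlmCount_insertMax, Fin.castSucc_ne_last, Fin.last_pos.ne',
    Fin.castSucc_inj, Fin.castSucc_eq_zero_iff, forall_eq, IsEmpty.forall_iff, implies_true,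
    if_false, if_true, add_zero, ne_eq, not_false_eq_true, true_and, and_true,
    Nat.add_right_cancel_iff]
  split_ifs with h
  · simp only [h, and_true, true_and]
    rw [h.1.sum_ite_ne_zero_isRLMin, h.2, Nat.add_sub_cancel]
  · exact Finset.sum_eq_zero fun j _ => if_neg fun hj => h ⟨hj.1.2.1, hj.2⟩

theorem flatRLMinCount_succ_succ (n k : ℕ) :
    flatRLMinCount (n + 2) (k + 1) =
      k * flatRLMinCount (n + 1) (k + 1) + flatRLMinCount (n + 1) k := by
  classical
  simp only [flatRLMinCount, ncard_setOf_eq_sum_ite]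
  rw [← insertMaxEquiv.sum_comp, Fintype.sum_prod_type]
  simp only [insertMaxEquiv, Equiv.ofBijective_apply, sum_ite_flattened_insertMax,
    Finset.sum_add_distrib, Finset.mul_sum, mul_ite, mul_one, mul_zero]

theorem flatRLMinCount_succ_zero (n : ℕ) : flatRLMinCount (n + 1) 0 = 0 := by
  simp [flatRLMinCount, (rlmCount_pos _).ne']

theorem flatRLMinCount_one (k : ℕ) : flatRLMinCount 1 (k + 1) = stirling2 0 k := by
  have hπ (π : Perm (Fin 1)) : Flattened π ∧ rlmCount π = 1 := by
    refine ⟨fun i j _ _ hij => absurd hij (Subsingleton.elim i j).not_lt, ?_⟩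
    classical
    rw [rlmCount_eq_sum, Fin.sum_univ_one]
    exact if_pos (isRLMin_last π)
  cases k <;> simp [flatRLMinCount, hπ, stirling2]

theorem flatRLMinCount_eq_stirling2 (n k : ℕ) :
    flatRLMinCount (n + 1) (k + 1) = stirling2 n k := by
  induction n generalizing k with
  | zero => exact flatRLMinCount_one k
  | succ n ih =>
    rw [flatRLMinCount_succ_succ]
    cases k with
    | zero => simp [flatRLMinCount_succ_zero, stirling2]
    | succ k => rw [ih, ih, stirling2]

theorem flattened_rlm_count (n k : ℕ) (hn : 1 ≤ n) (hk : 1 ≤ k) :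
    {π : Equiv.Perm (Fin n) | Flattened π ∧ rlmCount π = k}.ncard =
      stirling2 (n - 1) (k - 1) := by
  obtain ⟨n, rfl⟩ := Nat.exists_eq_add_of_le' hn
  obtain ⟨k, rfl⟩ := Nat.exists_eq_add_of_le' hk
  exact flatRLMinCount_eq_stirling2 n k
end
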